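/- The function Z₂(u) = (1/Γ(5/4)) · ₁F₃(−1/4; 1/4, 1/2, 3/4; u⁴/256) − u/√2 + (u³/(6√2 Γ(1/2))) · ₁F₃(1/2; 5/4, 3/2, 7/4; u⁴/256) satisfies the fourth-order linear ordinary differential equation Z⁗(u) − (1/4) u Z′(u) + (1/4) Z(u) = 0 for every u ∈ ℝ. -/

import Mathlib

/-- Pochhammer symbol (rising factorial) `(a)_k = a(a+1)⋯(a+k-1)`. -/
noncomputable def poch (a : ℝ) (k : ℕ) : ℝ := ∏ i ∈ Finset.range k, (a + (i : ℝ))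

/-- Generalized hypergeometric function `₁F₃(a; b₁, b₂, b₃; z)`. -/
noncomputable def F13 (a b₁ b₂ b₃ z : ℝ) : ℝ :=
  ∑' k : ℕ, poch a k / (poch b₁ k * poch b₂ k * poch b₃ k) * z ^ k / (Nat.factorial k)

/-- The similarity solution `Z₂` of Mullins' equation. -/
noncomputable def Z₂ (u : ℝ) : ℝ :=
  1 / Real.Gamma (5/4) * F13 (-1/4) (1/4) (1/2) (3/4) (u ^ 4 / 256)
  - u / Real.sqrt 2
  + u ^ 3 / (6 * Real.sqrt 2 * Real.Gamma (1/2)) * F13 (1/2) (5/4) (3/2) (7/4) (u ^ 4 / 256)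

/-!
`Z₂` is an entire power series `∑ cₙ uⁿ`: the first `₁F₃` contributes the powers `u^(4k)`, the
linear term `u`, and the second `₁F₃` the powers `u^(4k+3)`. Differentiating termwise, the ODE
becomes the coefficient recurrence `(n+1)(n+2)(n+3)(n+4) c_(n+4) = (n-1)/4 · cₙ`. On each residue
class mod 4 this is the ratio `(a+k) z / ((b₁+k)(b₂+k)(b₃+k)(k+1))` of consecutive `₁F₃` terms at
`z = 1/256`, and for the linear term both sides vanish since `n - 1 = 0`.
-/

open FormalMultilinearSeries Filter Topology

section EntirePowerSeries

variable {f : ℝ → ℝ} {c : ℕ → ℝ}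

theorem hasFPowerSeriesOnBall_ofScalars_of_hasSum
    (h : ∀ y, HasSum (fun n => c n * y ^ n) (f y)) :
    HasFPowerSeriesOnBall f (ofScalars ℝ c) 0 ⊤ where
  r_le := ENNReal.le_of_forall_nnreal_lt fun r _ =>
    (ofScalars ℝ c).le_radius_of_tendsto (l := 0) <| by
      simpa only [ofScalars_norm, norm_mul, norm_pow, norm_zero, Real.norm_of_nonneg r.coe_nonneg]
        using (h r).summable.tendsto_atTop_zero.norm
  r_pos := ENNReal.zero_lt_top
  hasSum {y} _ := by
    simpa only [zero_add, ofScalars_apply_eq, smul_eq_mul] using h y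

theorem HasFPowerSeriesOnBall.hasSum_ofScalars
    (hf : HasFPowerSeriesOnBall f (ofScalars ℝ c) 0 ⊤) (u : ℝ) :
    HasSum (fun n => c n * u ^ n) (f u) := by
  simpa only [zero_add, ofScalars_apply_eq, smul_eq_mul] using
    hf.hasSum (y := u) (by simp)

theorem HasFPowerSeriesOnBall.deriv_ofScalars
    (hf : HasFPowerSeriesOnBall f (ofScalars ℝ c) 0 ⊤) :
    HasFPowerSeriesOnBall (deriv f) (ofScalars ℝ fun n => (n + 1) * c (n + 1)) 0 ⊤ := by
  have hfun : ContinuousLinearMap.apply ℝ ℝ (1 : ℝ) ∘ fderiv ℝ f = deriv f := by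
    funext y
    simp
  have hser : (ContinuousLinearMap.apply ℝ ℝ (1 : ℝ)).compFormalMultilinearSeries
      (ofScalars ℝ c).derivSeries = ofScalars ℝ fun n => (n + 1) * c (n + 1) := by
    funext n
    rw [← mkPiRing_coeff_eq (ofScalars ℝ _) n,
      ← mkPiRing_coeff_eq (ContinuousLinearMap.compFormalMultilinearSeries _ _) n]
    congr 1
    change (ofScalars ℝ c).derivSeries n (fun _ => 1) 1 = _
    rw [derivSeries_apply_diag]
    simp [ofScalars]
  rw [← hfun, ← hser]
  exact (ContinuousLinearMap.apply ℝ ℝ (1 : ℝ)).comp_hasFPowerSeriesOnBall hf.fderiv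

theorem HasFPowerSeriesOnBall.iteratedDeriv_ofScalars
    (hf : HasFPowerSeriesOnBall f (ofScalars ℝ c) 0 ⊤) (k : ℕ) :
    HasFPowerSeriesOnBall (iteratedDeriv k f)
      (ofScalars ℝ fun n => ((n + 1).ascFactorial k : ℝ) * c (n + k)) 0 ⊤ := by
  induction k generalizing f c with
  | zero => simpa [iteratedDeriv_zero] using hf
  | succ k ih =>
    rw [iteratedDeriv_succ']
    convert ih hf.deriv_ofScalars using 3 with n
    rw [Nat.ascFactorial_succ, ← add_assoc]
    push_cast
    ring

end EntirePowerSeries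

def SimilarityRecurrence (c : ℕ → ℝ) : Prop :=
  ∀ n : ℕ, ((n : ℝ) + 1) * (n + 2) * (n + 3) * (n + 4) * c (n + 4) = (n - 1) / 4 * c n

theorem SimilarityRecurrence.add {c d : ℕ → ℝ} (hc : SimilarityRecurrence c)
    (hd : SimilarityRecurrence d) : SimilarityRecurrence (c + d) := fun n => by
  simp only [Pi.add_apply]
  linear_combination hc n + hd n

theorem similarityRecurrence_single_one (c : ℝ) : SimilarityRecurrence (Pi.single 1 c) := by
  intro n
  rcases eq_or_ne n 1 with rfl | hn
  · norm_num
  · simp [hn]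

theorem iteratedDeriv_four_sub_mul_deriv_add_eq_zero_of_similarityRecurrence
    {f : ℝ → ℝ} {c : ℕ → ℝ} (hf : HasFPowerSeriesOnBall f (ofScalars ℝ c) 0 ⊤)
    (hc : SimilarityRecurrence c) (u : ℝ) :
    iteratedDeriv 4 f u - 1/4 * u * deriv f u + 1/4 * f u = 0 := by
  have h4 : HasSum (fun n : ℕ => (n - 1) / 4 * c n * u ^ n) (iteratedDeriv 4 f u) := by
    refine ((hf.iteratedDeriv_ofScalars 4).hasSum_ofScalars u).congr_fun fun n => ?_
    rw [← hc n]
    simp only [Nat.ascFactorial, Nat.cast_mul, Nat.cast_add, Nat.cast_ofNat, Nat.cast_one]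
    ring
  have h1 : HasSum (fun n : ℕ => n * c n * u ^ n) (u * deriv f u) := by
    rw [← hasSum_nat_add_iff' 1]
    simp only [Finset.sum_range_one, Nat.cast_zero, zero_mul, sub_zero]
    exact (hf.deriv_ofScalars.hasSum_ofScalars u).mul_left u |>.congr_fun fun n => by
      push_cast
      ring
  have h4' := ((h1.sub (hf.hasSum_ofScalars u)).mul_left (1/4)).congr_fun
    fun n : ℕ => show (n - 1) / 4 * c n * u ^ n = _ by ring
  rw [h4.unique h4']
  ring

section Lacunary

def lacunaryCoeff (m j : ℕ) (a : ℕ → ℝ) (n : ℕ) : ℝ :=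
  if n % m = j then a (n / m) else 0

variable {m j : ℕ} {a : ℕ → ℝ}

theorem lacunaryCoeff_mul_add (hj : j < m) (k : ℕ) : lacunaryCoeff m j a (m * k + j) = a k := by
  have hm : 0 < m := by omega
  simp [lacunaryCoeff, Nat.mul_add_div hm, Nat.mod_eq_of_lt hj, Nat.div_eq_of_lt hj]

theorem exists_eq_mul_add_of_mod_eq {n : ℕ} (hn : n % m = j) : ∃ k, n = m * k + j :=
  ⟨n / m, by rw [← hn, Nat.div_add_mod]⟩

theorem hasSum_lacunaryCoeff_mul_pow (hj : j < m) {y s : ℝ}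
    (h : HasSum (fun k => a k * y ^ (m * k + j)) s) :
    HasSum (fun n => lacunaryCoeff m j a n * y ^ n) s := by
  have hinj : Function.Injective fun k => m * k + j := fun k l hkl => by
    simpa [show m ≠ 0 by omega] using hkl
  rw [← hinj.hasSum_iff]
  · simpa only [Function.comp_def, lacunaryCoeff_mul_add hj] using h
  · intro n hn
    have : n % m ≠ j := fun hnj => hn (exists_eq_mul_add_of_mod_eq hnj |>.imp fun _ => Eq.symm)
    simp [lacunaryCoeff, this]

theorem lacunaryCoeff_rec (hj : j < m) {P Q : ℕ → ℝ}
    (h : ∀ k, P (m * k + j) * a (k + 1) = Q (m * k + j) * a k) (n : ℕ) :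
    P n * lacunaryCoeff m j a (n + m) = Q n * lacunaryCoeff m j a n := by
  by_cases hnj : n % m = j
  · obtain ⟨k, rfl⟩ := exists_eq_mul_add_of_mod_eq hnj
    rw [show m * k + j + m = m * (k + 1) + j by ring, lacunaryCoeff_mul_add hj,
      lacunaryCoeff_mul_add hj, h k]
  · simp [lacunaryCoeff, hnj]

end Lacunary

theorem summable_of_succ_eq_mul_of_tendsto_zero {R : Type*} [NormedRing R] [CompleteSpace R]
    {t r : ℕ → R} (h : ∀ k, t (k + 1) = t k * r k) (hr : Tendsto r atTop (𝓝 0)) :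
    Summable t := by
  refine summable_of_ratio_norm_eventually_le (r := 1/2) (by norm_num) ?_
  have hsmall : ∀ᶠ k in atTop, ‖r k‖ ≤ 1/2 :=
    hr.norm.eventually (ge_mem_nhds (by norm_num))
  filter_upwards [hsmall] with k hk
  calc ‖t (k + 1)‖ ≤ ‖t k‖ * ‖r k‖ := h k ▸ norm_mul_le _ _
    _ ≤ ‖t k‖ * (1/2) := by gcongr
    _ = 1/2 * ‖t k‖ := mul_comm _ _

section Hypergeometric

theorem poch_succ (a : ℝ) (k : ℕ) : poch a (k + 1) = poch a k * (a + k) :=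
  Finset.prod_range_succ _ _

theorem poch_ne_zero {b : ℝ} (hb : ∀ k : ℕ, b + k ≠ 0) (k : ℕ) : poch b k ≠ 0 :=
  Finset.prod_ne_zero_iff.2 fun i _ => hb i

noncomputable def F13Term (a b₁ b₂ b₃ z : ℝ) (k : ℕ) : ℝ :=
  poch a k / (poch b₁ k * poch b₂ k * poch b₃ k) * z ^ k / k.factorial

variable {a b₁ b₂ b₃ : ℝ}

theorem F13Term_succ (hb₁ : ∀ k : ℕ, b₁ + k ≠ 0) (hb₂ : ∀ k : ℕ, b₂ + k ≠ 0)
    (hb₃ : ∀ k : ℕ, b₃ + k ≠ 0) (z : ℝ) (k : ℕ) :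
    F13Term a b₁ b₂ b₃ z (k + 1)
      = F13Term a b₁ b₂ b₃ z k * ((a + k) * z / ((b₁ + k) * (b₂ + k) * (b₃ + k) * (k + 1))) := by
  have := poch_ne_zero hb₁ k
  have := poch_ne_zero hb₂ k
  have := poch_ne_zero hb₃ k
  have := hb₁ k
  have := hb₂ k
  have := hb₃ k
  simp only [F13Term, poch_succ, pow_succ, Nat.factorial_succ, Nat.cast_mul, Nat.cast_succ]
  field_simp

theorem tendsto_F13Term_ratio (a b₁ b₂ b₃ z : ℝ) :
    Tendsto (fun k : ℕ => (a + k) * z / ((b₁ + k) * (b₂ + k) * (b₃ + k) * (k + 1)))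
      atTop (𝓝 0) := by
  have hlin : ∀ b : ℝ, Tendsto (fun k : ℕ => b + k) atTop atTop := fun b =>
    tendsto_atTop_add_const_left _ b tendsto_natCast_atTop_atTop
  have hfirst : Tendsto (fun k : ℕ => (a + k) / (b₁ + k)) atTop (𝓝 1) := by
    simpa using tendsto_add_mul_div_add_mul_atTop_nhds a b₁ (1 : ℝ) one_ne_zero
  have hrest : Tendsto (fun k : ℕ => z / ((b₂ + k) * (b₃ + k) * (k + 1))) atTop (𝓝 0) :=
    tendsto_const_nhds.div_atTop <| ((hlin b₂).atTop_mul_atTop₀ (hlin b₃)).atTop_mul_atTop₀ <|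
      tendsto_atTop_add_const_right _ 1 tendsto_natCast_atTop_atTop
  simpa [div_mul_div_comm, mul_assoc] using hfirst.mul hrest

theorem hasSum_F13Term (hb₁ : ∀ k : ℕ, b₁ + k ≠ 0) (hb₂ : ∀ k : ℕ, b₂ + k ≠ 0)
    (hb₃ : ∀ k : ℕ, b₃ + k ≠ 0) (z : ℝ) :
    HasSum (F13Term a b₁ b₂ b₃ z) (F13 a b₁ b₂ b₃ z) :=
  (summable_of_succ_eq_mul_of_tendsto_zero (F13Term_succ hb₁ hb₂ hb₃ z)
    (tendsto_F13Term_ratio a b₁ b₂ b₃ z)).hasSum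

theorem F13Term_pow_div (y d : ℝ) (m k : ℕ) :
    F13Term a b₁ b₂ b₃ (y ^ m / d) k = F13Term a b₁ b₂ b₃ d⁻¹ k * y ^ (m * k) := by
  simp only [F13Term, div_pow, inv_pow, pow_mul]
  ring

end Hypergeometric

theorem hasSum_lacunaryCoeff_F13Term {a b₁ b₂ b₃ : ℝ} (hb₁ : ∀ k : ℕ, b₁ + k ≠ 0)
    (hb₂ : ∀ k : ℕ, b₂ + k ≠ 0) (hb₃ : ∀ k : ℕ, b₃ + k ≠ 0) {m j : ℕ} (hj : j < m)
    (c y d : ℝ) :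
    HasSum (fun n => lacunaryCoeff m j (fun k => c * F13Term a b₁ b₂ b₃ d⁻¹ k) n * y ^ n)
      (c * y ^ j * F13 a b₁ b₂ b₃ (y ^ m / d)) :=
  hasSum_lacunaryCoeff_mul_pow hj <| ((hasSum_F13Term hb₁ hb₂ hb₃ _).mul_left (c * y ^ j)).congr_fun
    fun k => by rw [F13Term_pow_div, pow_add]; ring

theorem similarityRecurrence_lacunaryCoeff_four_zero (c : ℝ) :
    SimilarityRecurrence
      (lacunaryCoeff 4 0 fun k => c * F13Term (-1/4) (1/4) (1/2) (3/4) 256⁻¹ k) :=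
  lacunaryCoeff_rec (P := fun n : ℕ => ((n : ℝ) + 1) * (n + 2) * (n + 3) * (n + 4))
    (Q := fun n : ℕ => ((n : ℝ) - 1) / 4) (by norm_num) fun k => by
      rw [F13Term_succ (fun k => by positivity) (fun k => by positivity) (fun k => by positivity)]
      push_cast
      field_simp
      ring

theorem similarityRecurrence_lacunaryCoeff_four_three (c : ℝ) :
    SimilarityRecurrence
      (lacunaryCoeff 4 3 fun k => c * F13Term (1/2) (5/4) (3/2) (7/4) 256⁻¹ k) :=
  lacunaryCoeff_rec (P := fun n : ℕ => ((n : ℝ) + 1) * (n + 2) * (n + 3) * (n + 4))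
    (Q := fun n : ℕ => ((n : ℝ) - 1) / 4) (by norm_num) fun k => by
      rw [F13Term_succ (fun k => by positivity) (fun k => by positivity) (fun k => by positivity)]
      push_cast
      field_simp
      ring

noncomputable def Z₂Coeff : ℕ → ℝ :=
  lacunaryCoeff 4 0 (fun k => (Real.Gamma (5/4))⁻¹ * F13Term (-1/4) (1/4) (1/2) (3/4) 256⁻¹ k)
  + Pi.single 1 (-(Real.sqrt 2)⁻¹)
  + lacunaryCoeff 4 3
      (fun k => (6 * Real.sqrt 2 * Real.Gamma (1/2))⁻¹ * F13Term (1/2) (5/4) (3/2) (7/4) 256⁻¹ k)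

theorem hasSum_Z₂Coeff_mul_pow (y : ℝ) : HasSum (fun n => Z₂Coeff n * y ^ n) (Z₂ y) := by
  have hA := hasSum_lacunaryCoeff_F13Term (a := -1/4) (b₁ := 1/4) (b₂ := 1/2) (b₃ := 3/4)
    (fun k => by positivity) (fun k => by positivity) (fun k => by positivity)
    (m := 4) (j := 0) (by norm_num) (Real.Gamma (5/4))⁻¹ y 256
  have hL : HasSum (fun n => Pi.single (M := fun _ => ℝ) 1 (-(Real.sqrt 2)⁻¹) n * y ^ n)
      (-(Real.sqrt 2)⁻¹ * y) :=
    (hasSum_ite_eq 1 (-(Real.sqrt 2)⁻¹ * y)).congr_fun fun n => by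
      rcases eq_or_ne n 1 with rfl | hn <;> simp [*]
  have hB := hasSum_lacunaryCoeff_F13Term (a := 1/2) (b₁ := 5/4) (b₂ := 3/2) (b₃ := 7/4)
    (fun k => by positivity) (fun k => by positivity) (fun k => by positivity)
    (m := 4) (j := 3) (by norm_num) (6 * Real.sqrt 2 * Real.Gamma (1/2))⁻¹ y 256
  convert (hA.add hL).add hB using 1
  · funext n
    simp only [Z₂Coeff, Pi.add_apply]
    ring
  · simp only [Z₂]
    ring

theorem similarityRecurrence_Z₂Coeff : SimilarityRecurrence Z₂Coeff :=
  ((similarityRecurrence_lacunaryCoeff_four_zero _).add (similarityRecurrence_single_one _)).add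
    (similarityRecurrence_lacunaryCoeff_four_three _)

/-- `Z₂` satisfies the similarity ODE `Z⁗(u) - (1/4) u Z'(u) + (1/4) Z(u) = 0` on all of `ℝ`. -/
theorem Z₂_satisfies_similarity_ODE (u : ℝ) :
    iteratedDeriv 4 Z₂ u - 1/4 * u * deriv Z₂ u + 1/4 * Z₂ u = 0 :=
  iteratedDeriv_four_sub_mul_deriv_add_eq_zero_of_similarityRecurrence
    (hasFPowerSeriesOnBall_ofScalars_of_hasSum hasSum_Z₂Coeff_mul_pow)
    similarityRecurrence_Z₂Coeff u
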